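/- Let M be a left H-module and ∇ : M → H ⊗ M a k-linear map; set ρ(m) = ∇(m) + 1⊗m. Then ∇ satisfies the connection Leibniz rule ∇(hm) = h·∇(m) + d(h)⊗_H m (with respect to the calculus 𝒦*(H)) if and only if ρ satisfies the anti-Yetter-Drinfeld compatibility ρ(hm) = h₍₁₎ m₍₋₁₎ S⁻¹(h₍₃₎) ⊗ h₍₂₎ m₍₀₎. -/

import Mathlib

/- STATEMENT 12: Let M be a left H-module and ∇ : M → H ⊗ M a k-linear map; set
ρ(m) = ∇(m) + 1⊗m. Then ∇ satisfies the connection Leibniz rule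
∇(hm) = h·∇(m) + d(h)⊗_H m (w.r.t. the calculus 𝒦*(H)) iff ρ satisfies the
anti-Yetter-Drinfeld compatibility ρ(hm) = h₍₁₎ m₍₋₁₎ S⁻¹(h₍₃₎) ⊗ h₍₂₎ m₍₀₎. -/

open TensorProduct

noncomputable section

variable (k : Type) [Field k] (H : Type) [Ring H] [HopfAlgebra k H]

def Delta2 : H →ₗ[k] (H ⊗[k] H) ⊗[k] H :=
  (TensorProduct.map Coalgebra.comul LinearMap.id) ∘ₗ Coalgebra.comul

variable {A B C : Type} [AddCommGroup A] [AddCommGroup B] [AddCommGroup C]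
  [Module k A] [Module k B] [Module k C]

def sw3 : (A ⊗[k] B) ⊗[k] C →ₗ[k] (A ⊗[k] C) ⊗[k] B :=
  (TensorProduct.assoc k A C B).symm.toLinearMap
    ∘ₗ (TensorProduct.map LinearMap.id (TensorProduct.comm k B C).toLinearMap)
    ∘ₗ (TensorProduct.assoc k A B C).toLinearMap

variable (X : Type) [AddCommGroup X] [Module k X]

def twist (Sm : H →ₗ[k] H) (act : H ⊗[k] X →ₗ[k] X) :
    H ⊗[k] (H ⊗[k] X) →ₗ[k] H ⊗[k] X :=
  (TensorProduct.map (LinearMap.mul' k H) act)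
    ∘ₗ (TensorProduct.tensorTensorTensorComm k H H H X).toLinearMap
    ∘ₗ (TensorProduct.map
          ((TensorProduct.map (LinearMap.mul' k H) LinearMap.id) ∘ₗ sw3 k)
          (TensorProduct.map Sm LinearMap.id))
    ∘ₗ (TensorProduct.tensorTensorTensorComm k (H ⊗[k] H) H H X).toLinearMap
    ∘ₗ (TensorProduct.map (Delta2 k H) LinearMap.id)

variable (Sinv : H →ₗ[k] H)

def phi2 : (H ⊗[k] H) ⊗[k] H →ₗ[k] H ⊗[k] H :=
  (TensorProduct.map (LinearMap.mul' k H) LinearMap.id)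
    ∘ₗ (TensorProduct.map (TensorProduct.map LinearMap.id Sinv) LinearMap.id)
    ∘ₗ sw3 k

/-- The degree-zero differential `d(h) = −(1⊗h) + (h₍₁₎S⁻¹(h₍₃₎) ⊗ h₍₂₎)`. -/
def d0 : H →ₗ[k] H ⊗[k] H :=
  (phi2 k H Sinv ∘ₗ Delta2 k H) - (TensorProduct.mk k H H 1)

variable [Module H X] [IsScalarTower k H X] [SMulCommClass H k X]

def actMap : H ⊗[k] X →ₗ[k] X :=
  TensorProduct.lift (LinearMap.mk₂ k (fun (h : H) (x : X) => h • x)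
    (fun h h' x => add_smul h h' x)
    (fun c h x => smul_assoc c h x)
    (fun h x y => smul_add h x y)
    (fun c h x => smul_comm h c x))

/-- The identification `𝒦¹(H) ⊗_H X ≅ H ⊗ X` applied to `ω ⊗_H x` :
`(g ⊗ g') ⊗ x ↦ g ⊗ g'x`. -/
def pairHX : (H ⊗[k] H) ⊗[k] X →ₗ[k] H ⊗[k] X :=
  (TensorProduct.map LinearMap.id (actMap k H X))
    ∘ₗ (TensorProduct.assoc k H H X).toLinearMap

/-!
Both `d(h) ⊗_H m` and the twisted action of `h` on `1 ⊗ m` are, under `𝒦¹(H) ⊗_H M ≅ H ⊗ M`,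
built from `h₍₁₎S⁻¹(h₍₃₎) ⊗ h₍₂₎m`; hence `d(h) ⊗_H m = h·(1 ⊗ m) − 1 ⊗ hm`. Adding `1 ⊗ hm`
to both sides of the Leibniz rule turns it into the AYD compatibility of `ρ = ∇ + 1 ⊗ (-)`.
-/

def twistOfTriple (Sm : H →ₗ[k] H) (act : H ⊗[k] X →ₗ[k] X) :
    ((H ⊗[k] H) ⊗[k] H) ⊗[k] (H ⊗[k] X) →ₗ[k] H ⊗[k] X :=
  (TensorProduct.map (LinearMap.mul' k H) act)
    ∘ₗ (TensorProduct.tensorTensorTensorComm k H H H X).toLinearMap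
    ∘ₗ (TensorProduct.map
          ((TensorProduct.map (LinearMap.mul' k H) LinearMap.id) ∘ₗ sw3 k)
          (TensorProduct.map Sm LinearMap.id))
    ∘ₗ (TensorProduct.tensorTensorTensorComm k (H ⊗[k] H) H H X).toLinearMap

theorem twist_eq_twistOfTriple_comp {Y : Type} [AddCommGroup Y] [Module k Y]
    (Sm : H →ₗ[k] H) (act : H ⊗[k] Y →ₗ[k] Y) :
    twist k H Y Sm act =
      twistOfTriple k H Y Sm act ∘ₗ TensorProduct.map (Delta2 k H) LinearMap.id :=
  rfl

theorem twistOfTriple_tmul {Y : Type} [AddCommGroup Y] [Module k Y]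
    (Sm : H →ₗ[k] H) (act : H ⊗[k] Y →ₗ[k] Y) (a b c g : H) (y : Y) :
    twistOfTriple k H Y Sm act (((a ⊗ₜ b) ⊗ₜ c) ⊗ₜ (g ⊗ₜ y)) =
      (a * g * Sm c) ⊗ₜ act (b ⊗ₜ y) := by
  simp [twistOfTriple, sw3, mul_assoc]

theorem phi2_tmul (a b c : H) :
    phi2 k H Sinv ((a ⊗ₜ b) ⊗ₜ c) = (a * Sinv c) ⊗ₜ b := by
  simp [phi2, sw3]

theorem actMap_tmul (h : H) (x : X) : actMap k H X (h ⊗ₜ x) = h • x := rfl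

theorem pairHX_tmul (a b : H) (x : X) :
    pairHX k H X ((a ⊗ₜ b) ⊗ₜ x) = a ⊗ₜ (b • x) := by
  simp [pairHX, actMap_tmul]

theorem twistOfTriple_tmul_one_tmul (t : (H ⊗[k] H) ⊗[k] H) (m : X) :
    twistOfTriple k H X Sinv (actMap k H X) (t ⊗ₜ ((1 : H) ⊗ₜ m)) =
      pairHX k H X (phi2 k H Sinv t ⊗ₜ m) := by
  suffices (twistOfTriple k H X Sinv (actMap k H X)).comp ((mk k _ _).flip (1 ⊗ₜ m)) =
      ((pairHX k H X).comp ((mk k _ _).flip m)).comp (phi2 k H Sinv) from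
    LinearMap.congr_fun this t
  refine TensorProduct.ext_threefold fun a b c => ?_
  simp [twistOfTriple_tmul, phi2_tmul, pairHX_tmul, actMap_tmul]

theorem pairHX_d0_tmul (h : H) (m : X) :
    pairHX k H X (d0 k H Sinv h ⊗ₜ m) =
      twist k H X Sinv (actMap k H X) (h ⊗ₜ ((1 : H) ⊗ₜ m)) - (1 : H) ⊗ₜ (h • m) := by
  rw [twist_eq_twistOfTriple_comp, LinearMap.comp_apply, map_tmul, LinearMap.id_apply,
    twistOfTriple_tmul_one_tmul, d0, LinearMap.sub_apply, sub_tmul, map_sub, mk_apply,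
    pairHX_tmul, LinearMap.comp_apply]

theorem statement12
    (nabla : X →ₗ[k] H ⊗[k] X) :
    -- the Leibniz rule for a connection:
    (∀ (h : H) (m : X),
      nabla (h • m) =
        twist k H X Sinv (actMap k H X) (h ⊗ₜ[k] nabla m)
          + pairHX k H X (d0 k H Sinv h ⊗ₜ[k] m))
    ↔
    -- `ρ(m) = ∇(m) + 1 ⊗ m` satisfies the AYD compatibility:
    (∀ (h : H) (m : X),
      (nabla + TensorProduct.mk k H X 1) (h • m) =
        twist k H X Sinv (actMap k H X)
          (h ⊗ₜ[k] (nabla + TensorProduct.mk k H X 1) m)) := by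
  refine forall₂_congr fun h m => ?_
  rw [pairHX_d0_tmul, LinearMap.add_apply, LinearMap.add_apply, mk_apply, mk_apply, tmul_add,
    map_add, ← add_sub_assoc, eq_sub_iff_add_eq]

end
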